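/- arXiv:math/0103039 — 7 statements merged into one kernel-verified Lean document; each statement's English description precedes it below -/
import Mathlib

section
/- Let E be a row-finite directed graph. If (E, v_1, …, v_n) is an n-sink extension of G, then H := E^0 \ G^0 is a saturated hereditary subset of E^0 and equals the saturation of the set S = {v_1, …, v_n} of sinks. -/
/-- A step (edge) from `a` to `b` in the graph with edge set `Ed`, source `s`, range `r`. -/
def Step {V Ed : Type} (s r : Ed → V) (a b : V) : Prop := ∃ e, s e = a ∧ r e = b

/-- `a` reaches `b` by a finite (possibly empty) path. -/
def Reaches {V Ed : Type} (s r : Ed → V) : V → V → Prop := Relation.ReflTransGen (Step s r)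

/-- A sink is a vertex emitting no edges. -/
def IsSink {V Ed : Type} (s : Ed → V) (v : V) : Prop := ∀ e, s e ≠ v

/-- Row-finite: each vertex emits finitely many edges. -/
def RowFinite {V Ed : Type} (s : Ed → V) : Prop := ∀ v, {e | s e = v}.Finite

/-- A set of vertices is hereditary if it is closed under ranges of edges. -/
def Hereditary {V Ed : Type} (s r : Ed → V) (H : Set V) : Prop := ∀ e, s e ∈ H → r e ∈ H

/-- A set of vertices is saturated if it contains every non-sink all of whose emitted
edges have range in the set. -/
def Saturated {V Ed : Type} (s r : Ed → V) (H : Set V) : Prop :=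
  ∀ v, ¬ IsSink s v → (∀ e, s e = v → r e ∈ H) → v ∈ H

/-- The saturation of a set of vertices: the smallest hereditary and saturated set containing it. -/
def Saturation {V Ed : Type} (s r : Ed → V) (S : Set V) : Set V :=
  ⋂₀ {H | S ⊆ H ∧ Hereditary s r H ∧ Saturated s r H}

/-- `IsPathFrom s r p a b` : the list of edges `p` is a composable path from `a` to `b`. -/
def IsPathFrom {V Ed : Type} (s r : Ed → V) : List Ed → V → V → Prop
  | [], a, b => a = b
  | e :: p, a, b => s e = a ∧ IsPathFrom s r p (r e) b

/-- A step using only edges from the set `EE`. -/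
def StepIn {V Ed : Type} (s r : Ed → V) (EE : Set Ed) (a b : V) : Prop :=
  ∃ e ∈ EE, s e = a ∧ r e = b

/-- A sink of the subgraph with edge set `EE`. -/
def IsSinkIn {V Ed : Type} (s : Ed → V) (EE : Set Ed) (v : V) : Prop := ∀ e ∈ EE, s e ≠ v

/-- `E = (EV, EE)` is an `n`-sink extension of the subgraph `G = (GV, GE)`, with the `n`
distinguished sinks `sinks i` lying outside `G`. -/
structure SinkExt {V Ed : Type} (s r : Ed → V) (GV : Set V) (GE : Set Ed)
    (EV : Set V) (EE : Set Ed) {n : ℕ} (sinks : Fin n → V) : Prop where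
  g_sub_V : GV ⊆ EV
  g_sub_E : GE ⊆ EE
  e_edges_s : ∀ e ∈ EE, s e ∈ EV
  e_edges_r : ∀ e ∈ EE, r e ∈ EV
  g_edges_s : ∀ e ∈ GE, s e ∈ GV
  g_edges_r : ∀ e ∈ GE, r e ∈ GV
  H_finite : (EV \ GV).Finite
  no_sources : ∀ v ∈ EV \ GV, ∃ e ∈ EE, r e = v
  sinks_mem : ∀ i, sinks i ∈ EV \ GV
  sinks_sink : ∀ i, IsSinkIn s EE (sinks i)
  sinks_inj : Function.Injective sinks
  sinks_only : ∀ v ∈ EV \ GV, IsSinkIn s EE v → ∃ i, v = sinks i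
  no_loops : ¬ ∃ v, Relation.TransGen
      (fun a b => a ∈ EV \ GV ∧ b ∈ EV \ GV ∧ StepIn s r EE a b) v v
  new_edges : ∀ e ∈ EE, e ∉ GE → r e ∈ EV \ GV
  g_sinks : ∀ v ∈ GV, IsSinkIn s GE v → IsSinkIn s EE v

/-- If `(E, v_1, …, v_n)` is an `n`-sink extension of `G`, then
`H := E^0 \ G^0` is a saturated hereditary subset of `E^0`, and it equals the
saturation of the set `S = {v_1, …, v_n}` of sinks. -/
theorem stmt0 {V Ed : Type} (s r : Ed → V) (hrow : RowFinite s)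
    (GV : Set V) (GE : Set Ed) {n : ℕ} (sinks : Fin n → V)
    (hext : SinkExt s r GV GE Set.univ Set.univ sinks) :
    Hereditary s r GVᶜ ∧ Saturated s r GVᶜ ∧
      GVᶜ = Saturation s r (Set.range sinks) := by
  have hdiff : Set.univ \ GV = GVᶜ := by
    ext x; simp
  have hher : Hereditary s r GVᶜ := by
    intro e he
    have hnot : e ∉ GE := fun hg => he (hext.g_edges_s e hg)
    have h2 := hext.new_edges e (Set.mem_univ e) hnot
    rwa [hdiff] at h2
  have hsat : Saturated s r GVᶜ := by
    intro v hns hall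
    by_contra hv
    have hvGV : v ∈ GV := not_not.mp hv
    have hnsink : ¬ IsSinkIn s GE v := by
      intro hsink
      exact hns (fun e => hext.g_sinks v hvGV hsink e (Set.mem_univ e))
    unfold IsSinkIn at hnsink
    push_neg at hnsink
    obtain ⟨e, heGE, hse⟩ := hnsink
    exact (hall e hse) (hext.g_edges_r e heGE)
  refine ⟨hher, hsat, ?_⟩
  have hrange : Set.range sinks ⊆ GVᶜ := by
    rintro _ ⟨i, rfl⟩
    have := hext.sinks_mem i
    rwa [hdiff] at this
  apply Set.Subset.antisymm
  · -- GVᶜ ⊆ Saturation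
    intro v hv
    intro H' hH'
    obtain ⟨hS, hHer, hSat⟩ := hH'
    -- well-founded induction on finite acyclic subgraph
    have hfin : GVᶜ.Finite := by rw [← hdiff]; exact hext.H_finite
    haveI : Finite ↥GVᶜ := hfin.to_subtype
    set rel : ↥GVᶜ → ↥GVᶜ → Prop := fun a b => Step s r b.1 a.1 with hrel
    set rT : ↥GVᶜ → ↥GVᶜ → Prop := Relation.TransGen rel with hrT
    haveI : IsTrans ↥GVᶜ rT := ⟨fun _ _ _ => Relation.TransGen.trans⟩
    haveI : IsIrrefl ↥GVᶜ rT := by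
      constructor
      intro a ha
      apply hext.no_loops
      refine ⟨a.1, ?_⟩
      have hswap := Relation.TransGen.swap _ _ ha
      refine Relation.TransGen.lift Subtype.val ?_ _ _ hswap
      rintro x y ⟨e, hse, hre⟩
      refine ⟨by rw [hdiff]; exact x.2, by rw [hdiff]; exact y.2, e, Set.mem_univ e, hse, hre⟩
    have hwf : WellFounded rT := Finite.wellFounded_of_trans_of_irrefl rT
    suffices h : ∀ w : ↥GVᶜ, w.1 ∈ H' by exact h ⟨v, hv⟩
    intro w
    induction w using hwf.induction with
    | _ w IH =>
      by_cases hsink : IsSink s w.1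
      · have hmem : w.1 ∈ Set.univ \ GV := by rw [hdiff]; exact w.2
        obtain ⟨i, hi⟩ := hext.sinks_only w.1 hmem (fun e _ => hsink e)
        exact hS ⟨i, hi.symm⟩
      · apply hSat w.1 hsink
        intro e hse
        have hre : r e ∈ GVᶜ := hher e (by rw [hse]; exact w.2)
        exact IH ⟨r e, hre⟩ (Relation.TransGen.single ⟨e, hse, rfl⟩)
  · -- Saturation ⊆ GVᶜ
    exact Set.sInter_subset_of_mem ⟨hrange, hher, hsat⟩
end

section
/- Let (E, v_0) be a 1-sink tree extension of a row-finite graph G, let e be a boundary edge of E whose source s(e) is not a source of G, and let E(e) be the outsplitting of E by e. Then the Wojciech vector of E(e) satisfies W_{E(e)} = W_E + (A_G − I) δ_{s(e)}, where A_G is the vertex matrix of G and δ_{s(e)} is the indicator vector of s(e). -/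
/-- A graph containing the fixed graph `G = (V0, Ed0, s0, r0)` as a subgraph, together
with `n` distinguished vertices (the sinks added outside `G`). -/
structure GExt {V0 Ed0 : Type} (s0 r0 : Ed0 → V0) (n : ℕ) : Type 1 where
  V : Type
  Ed : Type
  s : Ed → V
  r : Ed → V
  ιV : V0 → V
  ιE : Ed0 → Ed
  sink : Fin n → V
  injV : Function.Injective ιV
  injE : Function.Injective ιE
  compat_s : ∀ f, s (ιE f) = ιV (s0 f)
  compat_r : ∀ f, r (ιE f) = ιV (r0 f)

variable {V0 Ed0 : Type} {s0 r0 : Ed0 → V0} {n : ℕ}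

/-- `H := E^0 \ G^0`, the vertices outside `G`. -/
def GExt.H (X : GExt s0 r0 n) : Set X.V := (Set.range X.ιV)ᶜ

/-- The conditions making `X` an `n`-sink extension of `G`. -/
structure IsNSinkExt (X : GExt s0 r0 n) : Prop where
  H_finite : X.H.Finite
  no_sources : ∀ v ∈ X.H, ∃ e, X.r e = v
  sink_mem : ∀ i, X.sink i ∈ X.H
  sink_sink : ∀ i, IsSink X.s (X.sink i)
  sink_inj : Function.Injective X.sink
  sink_only : ∀ v ∈ X.H, IsSink X.s v → ∃ i, v = X.sink i
  no_loops : ¬ ∃ v, Relation.TransGen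
      (fun a b => a ∈ X.H ∧ b ∈ X.H ∧ Step X.s X.r a b) v v
  new_edges : ∀ e, e ∉ Set.range X.ιE → X.r e ∈ X.H
  g_sinks : ∀ v : V0, IsSink s0 v → IsSink X.s (X.ιV v)

/-- A simple extension: every vertex outside `G` is one of the distinguished sinks. -/
def Simple (X : GExt s0 r0 n) : Prop :=
  Set.range X.ιV ∪ Set.range X.sink = Set.univ

/-- `Z(w, v_i)`: the set of paths in `E` from `w ∈ G^0` to the sink `v_i` which leave
`G` immediately (the range of the first edge is outside `G`). -/
def ZE (X : GExt s0 r0 n) (w : V0) (i : Fin n) : Set (List X.Ed) :=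
  {p | p ≠ [] ∧ IsPathFrom X.s X.r p (X.ιV w) (X.sink i) ∧
    ∀ e ∈ p.head?, X.r e ∈ X.H}

/-- The Wojciech vector of the sink `v_i`: `W_{(E;v_i)}(w) = #Z(w, v_i)`. -/
noncomputable def Wvec (X : GExt s0 r0 n) (i : Fin n) (w : V0) : ℕ := (ZE X w i).ncard

/-- The vertex matrix of `G`: the number of edges from `v` to `w` (as an integer). -/
noncomputable def AG (s0 r0 : Ed0 → V0) (v w : V0) : ℤ := ({f | s0 f = v ∧ r0 f = w}.ncard : ℕ)

/-- The outsplitting `E(e)` of `E` by a boundary edge `e`; a new vertex `v'` is added,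
`e` is replaced by an edge `e' : v' → r(e)`, and each edge `f` with `r(f) = s(e)` gets a
copy `f' : s(f) → v'`. -/
def GExt.outsplit (X : GExt s0 r0 n) (e : X.Ed) (hb : X.r e ∉ Set.range X.ιV) :
    GExt s0 r0 n where
  V := X.V ⊕ Unit
  Ed := {f : X.Ed // f ≠ e} ⊕ (Unit ⊕ {f : X.Ed // X.r f = X.s e})
  s := Sum.elim (fun f => Sum.inl (X.s f.1))
    (Sum.elim (fun _ => Sum.inr ()) (fun f => Sum.inl (X.s f.1)))
  r := Sum.elim (fun f => Sum.inl (X.r f.1))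
    (Sum.elim (fun _ => Sum.inl (X.r e)) (fun _ => Sum.inr ()))
  ιV := fun v => Sum.inl (X.ιV v)
  ιE := fun f => Sum.inl ⟨X.ιE f, fun h => hb (by rw [← h, X.compat_r]; exact Set.mem_range_self _)⟩
  sink := fun i => Sum.inl (X.sink i)
  injV := fun a b h => X.injV (Sum.inl_injective h)
  injE := fun a b h => X.injE (congrArg Subtype.val (Sum.inl_injective h))
  compat_s := fun f => by simp [X.compat_s]
  compat_r := fun f => by simp [X.compat_r]

/-- An isomorphism of extensions of `G`, fixing `G` and the distinguished sinks. -/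
structure GExtIso (X Y : GExt s0 r0 n) where
  vEquiv : X.V ≃ Y.V
  eEquiv : X.Ed ≃ Y.Ed
  map_s : ∀ e, vEquiv (X.s e) = Y.s (eEquiv e)
  map_r : ∀ e, vEquiv (X.r e) = Y.r (eEquiv e)
  map_ιV : ∀ v, vEquiv (X.ιV v) = Y.ιV v
  map_ιE : ∀ f, eEquiv (X.ιE f) = Y.ιE f
  map_sink : ∀ i, vEquiv (X.sink i) = Y.sink i

section StmtAux

open Classical in
/-- Generic counting lemma: if from every vertex of `H` there is a unique path to `t`,
then the paths from `a` to `t` whose first edge lands in `H` are counted by the edges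
from `a` into `H`. -/
lemma count_Z {V Ed : Type} (s r : Ed → V) (H : Set V) (a t : V)
    (huniq : ∀ v ∈ H, ∃! p : List Ed, IsPathFrom s r p v t) :
    {p : List Ed | p ≠ [] ∧ IsPathFrom s r p a t ∧ ∀ x ∈ p.head?, r x ∈ H}.ncard
      = {g | s g = a ∧ r g ∈ H}.ncard := by
  classical
  set P : V → List Ed := fun v =>
    if h : ∃ p : List Ed, IsPathFrom s r p v t then h.choose else [] with hPdef
  have hP : ∀ v ∈ H, IsPathFrom s r (P v) v t := by
    intro v hv
    have h : ∃ p : List Ed, IsPathFrom s r p v t := (huniq v hv).exists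
    simp only [hPdef, dif_pos h]
    exact h.choose_spec
  have hPu : ∀ v ∈ H, ∀ q, IsPathFrom s r q v t → q = P v := by
    intro v hv q hq
    obtain ⟨p, hp, hu⟩ := huniq v hv
    rw [hu q hq, hu _ (hP v hv)]
  have hset : {p : List Ed | p ≠ [] ∧ IsPathFrom s r p a t ∧ ∀ x ∈ p.head?, r x ∈ H}
      = (fun g => g :: P (r g)) '' {g | s g = a ∧ r g ∈ H} := by
    ext p
    constructor
    · rintro ⟨hne, hpath, hhead⟩
      cases p with
      | nil => exact absurd rfl hne
      | cons g q =>
        have hg : r g ∈ H := hhead g rfl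
        exact ⟨g, ⟨hpath.1, hg⟩, by
          show g :: P (r g) = g :: q
          rw [← hPu _ hg q hpath.2]⟩
    · rintro ⟨g, ⟨hs, hg⟩, rfl⟩
      refine ⟨List.cons_ne_nil _ _, ⟨hs, hP _ hg⟩, ?_⟩
      intro x hx
      have : g = x := by simpa using hx
      subst this; exact hg
  rw [hset, Set.ncard_image_of_injOn]
  intro x _ y _ hxy
  have := congrArg List.head? hxy
  simpa using this

variable {V0 Ed0 : Type} {s0 r0 : Ed0 → V0} {n : ℕ}
variable (X : GExt s0 r0 n) (e : X.Ed) (hb : X.r e ∉ Set.range X.ιV)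

/-- The edge map from the outsplit graph back to the original graph. -/
def osPhi : (X.outsplit e hb).Ed → X.Ed :=
  Sum.elim Subtype.val (Sum.elim (fun _ => e) Subtype.val)

/-- The vertex map from the outsplit graph back to the original graph. -/
def osPsi : (X.outsplit e hb).V → X.V := Sum.elim id (fun _ => X.s e)

lemma osPhi_s (x : (X.outsplit e hb).Ed) :
    X.s (osPhi X e hb x) = osPsi X e hb ((X.outsplit e hb).s x) := by
  rcases x with ⟨f, hf⟩ | ⟨⟩ | ⟨f, hf⟩ <;> simp [osPhi, osPsi, GExt.outsplit]

lemma osPhi_r (x : (X.outsplit e hb).Ed) :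
    X.r (osPhi X e hb x) = osPsi X e hb ((X.outsplit e hb).r x) := by
  rcases x with ⟨f, hf⟩ | ⟨⟩ | ⟨f, hf⟩
  · simp [osPhi, osPsi, GExt.outsplit]
  · simp [osPhi, osPsi, GExt.outsplit]
  · simpa [osPhi, osPsi, GExt.outsplit] using hf

lemma os_down (p : List (X.outsplit e hb).Ed) (a b : (X.outsplit e hb).V)
    (h : IsPathFrom (X.outsplit e hb).s (X.outsplit e hb).r p a b) :
    IsPathFrom X.s X.r (p.map (osPhi X e hb)) (osPsi X e hb a) (osPsi X e hb b) := by
  induction p generalizing a with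
  | nil => exact congrArg _ h
  | cons x p ih =>
    obtain ⟨hs, hrest⟩ := h
    refine ⟨by rw [osPhi_s, hs], ?_⟩
    rw [osPhi_r]
    exact ih _ hrest

lemma os_no_e (hsv : X.s e ∈ Set.range X.ιV) (x : (X.outsplit e hb).Ed) (v : X.V)
    (hx : (X.outsplit e hb).s x = Sum.inl v) : osPhi X e hb x ≠ e := by
  rcases x with ⟨f, hf⟩ | ⟨⟩ | ⟨f, hf⟩
  · exact hf
  · exact absurd hx (by simp [GExt.outsplit])
  · intro h
    have hfe : f = e := by simpa [osPhi] using h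
    have : X.r e ∈ Set.range X.ιV := by rw [← hfe, hf]; exact hsv
    exact hb this

lemma os_from_vnew (z : (X.outsplit e hb).Ed)
    (hz : (X.outsplit e hb).s z = Sum.inr ()) : z = Sum.inr (Sum.inl ()) := by
  rcases z with ⟨f, hf⟩ | ⟨⟩ | ⟨f, hf⟩
  · exact absurd hz (by simp [GExt.outsplit])
  · rfl
  · exact absurd hz (by simp [GExt.outsplit])

lemma os_not_both (hsv : X.s e ∈ Set.range X.ιV) (f : X.Ed) (hf : f ≠ e)
    (g : X.Ed) (hg : X.r g = X.s e)
    (p q : List (X.outsplit e hb).Ed) (t : X.V)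
    (hp : IsPathFrom (X.outsplit e hb).s (X.outsplit e hb).r p
      ((X.outsplit e hb).r (Sum.inl ⟨f, hf⟩)) (Sum.inl t))
    (hq : IsPathFrom (X.outsplit e hb).s (X.outsplit e hb).r q
      ((X.outsplit e hb).r (Sum.inr (Sum.inr ⟨g, hg⟩))) (Sum.inl t))
    (hm : p.map (osPhi X e hb) = q.map (osPhi X e hb)) : False := by
  cases q with
  | nil =>
    have h : (Sum.inr () : X.V ⊕ Unit) = Sum.inl t := hq
    simp at h
  | cons z q' =>
    obtain ⟨hz, _⟩ := hq
    have hz' : z = Sum.inr (Sum.inl ()) := os_from_vnew X e hb z hz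
    subst hz'
    cases p with
    | nil => simp at hm
    | cons u p' =>
      obtain ⟨hu, _⟩ := hp
      have h1 : osPhi X e hb u ≠ e := os_no_e X e hb hsv u (X.r f) hu
      have h2 : osPhi X e hb u = e := by
        have := congrArg List.head? hm
        exact Option.some.inj this
      exact h1 h2

lemma os_inj (hsv : X.s e ∈ Set.range X.ιV) :
    ∀ (p q : List (X.outsplit e hb).Ed) (a : (X.outsplit e hb).V) (t : X.V),
    IsPathFrom (X.outsplit e hb).s (X.outsplit e hb).r p a (Sum.inl t) →
    IsPathFrom (X.outsplit e hb).s (X.outsplit e hb).r q a (Sum.inl t) →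
    p.map (osPhi X e hb) = q.map (osPhi X e hb) → p = q := by
  intro p
  induction p with
  | nil =>
    intro q a t hp hq hm
    cases q with
    | nil => rfl
    | cons y q => simp at hm
  | cons x p ih =>
    intro q a t hp hq hm
    cases q with
    | nil => simp at hm
    | cons y q =>
      obtain ⟨hsx, hpx⟩ := hp
      obtain ⟨hsy, hqy⟩ := hq
      simp only [List.map_cons, List.cons.injEq] at hm
      obtain ⟨hm1, hm2⟩ := hm
      have hxy : x = y := by
        rcases x with ⟨f, hf⟩ | ⟨⟩ | ⟨f, hf⟩ <;> rcases y with ⟨g, hg⟩ | ⟨⟩ | ⟨g, hg⟩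
        · have : f = g := by simpa [osPhi] using hm1
          subst this; rfl
        · exact absurd (hsy.trans hsx.symm) (by simp [GExt.outsplit])
        · -- x = inl f, y = f' : contradiction
          have hfg : f = g := by simpa [osPhi] using hm1
          subst hfg
          exact absurd (os_not_both X e hb hsv f hf f hg p q t hpx hqy hm2) not_false
        · exact absurd (hsx.trans hsy.symm) (by simp [GExt.outsplit])
        · rfl
        · exact absurd (hsx.trans hsy.symm) (by simp [GExt.outsplit])
        · -- x = f', y = inl g : contradiction (symmetric)
          have hfg : g = f := by simpa [osPhi] using hm1.symm
          subst hfg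
          exact absurd (os_not_both X e hb hsv g hg g hf q p t hqy hpx hm2.symm) not_false
        · exact absurd (hsy.trans hsx.symm) (by simp [GExt.outsplit])
        · have : f = g := by simpa [osPhi] using hm1
          subst this; rfl
      subst hxy
      rw [ih q _ t hpx hqy hm2]

lemma os_lift (hsv : X.s e ∈ Set.range X.ιV) :
    ∀ (N : ℕ) (p : List X.Ed), p.length ≤ N → ∀ a b, IsPathFrom X.s X.r p a b →
    (∀ g ∈ p.head?, g ≠ e) →
    ∃ p', IsPathFrom (X.outsplit e hb).s (X.outsplit e hb).r p'
      (Sum.inl a) (Sum.inl b) := by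
  intro N
  induction N with
  | zero =>
    intro p hp a b hpath _
    have hpn : p = [] := List.length_eq_zero_iff.mp (Nat.le_zero.mp hp)
    subst hpn
    exact ⟨[], congrArg Sum.inl hpath⟩
  | succ N ih =>
    intro p hp a b hpath hhead
    cases p with
    | nil => exact ⟨[], congrArg Sum.inl hpath⟩
    | cons f rest =>
      obtain ⟨hsf, hrest⟩ := hpath
      have hf : f ≠ e := hhead f rfl
      cases rest with
      | nil =>
        exact ⟨[Sum.inl ⟨f, hf⟩], ⟨congrArg Sum.inl hsf, congrArg Sum.inl hrest⟩⟩
      | cons g rest2 =>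
        obtain ⟨hsg, hrest2⟩ := hrest
        by_cases hge : g = e
        · have hre : X.r f = X.s e := by rw [← hsg, hge]
          have hrest2' : IsPathFrom X.s X.r rest2 (X.r e) b := by rw [← hge]; exact hrest2
          have hheadr : ∀ x ∈ rest2.head?, x ≠ e := by
            intro x hx
            cases rest2 with
            | nil => simp at hx
            | cons z rest3 =>
              have hxz : z = x := by simpa using hx
              subst hxz
              intro hxe
              have h1 : X.s z = X.r e := hrest2'.1
              rw [hxe] at h1
              have : X.r e ∈ Set.range X.ιV := by rw [← h1]; exact hsv
              exact hb this
          obtain ⟨p', hp'⟩ := ih rest2 (by simp at hp ⊢; omega) (X.r e) b hrest2' hheadr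
          exact ⟨Sum.inr (Sum.inr ⟨f, hre⟩) :: Sum.inr (Sum.inl ()) :: p',
            ⟨congrArg Sum.inl hsf, rfl, hp'⟩⟩
        · have hhead2 : ∀ x ∈ (g :: rest2).head?, x ≠ e := by
            intro x hx
            have : g = x := by simpa using hx
            rw [← this]; exact hge
          obtain ⟨p', hp'⟩ := ih (g :: rest2) (by simp at hp ⊢; omega) (X.r f) b
            ⟨hsg, hrest2⟩ hhead2
          exact ⟨Sum.inl ⟨f, hf⟩ :: p', ⟨congrArg Sum.inl hsf, hp'⟩⟩

lemma os_unique_inl (hsv : X.s e ∈ Set.range X.ιV) (t : X.V)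
    (htree : ∀ v ∈ X.H, ∃! p : List X.Ed, IsPathFrom X.s X.r p v t) :
    ∀ v ∈ X.H, ∃! p' : List (X.outsplit e hb).Ed,
      IsPathFrom (X.outsplit e hb).s (X.outsplit e hb).r p' (Sum.inl v) (Sum.inl t) := by
  intro v hv
  obtain ⟨p, hp, hup⟩ := htree v hv
  have hhead : ∀ g ∈ p.head?, g ≠ e := by
    intro g hg
    cases p with
    | nil => simp at hg
    | cons z q =>
      have : z = g := by simpa using hg
      subst this
      intro hge
      subst hge
      exact hv (hp.1 ▸ hsv)
  obtain ⟨p', hp'⟩ := os_lift X e hb hsv p.length p le_rfl v t hp hhead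
  refine ⟨p', hp', ?_⟩
  intro q' hq'
  apply os_inj X e hb hsv q' p' (Sum.inl v) t hq' hp'
  have h1 := os_down X e hb q' _ _ hq'
  have h2 := os_down X e hb p' _ _ hp'
  rw [hup _ h1, hup _ h2]

lemma os_unique_inr (hsv : X.s e ∈ Set.range X.ιV) (t : X.V)
    (htree : ∀ v ∈ X.H, ∃! p : List X.Ed, IsPathFrom X.s X.r p v t) :
    ∃! p' : List (X.outsplit e hb).Ed,
      IsPathFrom (X.outsplit e hb).s (X.outsplit e hb).r p' (Sum.inr ()) (Sum.inl t) := by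
  have hre : X.r e ∈ X.H := hb
  obtain ⟨q, hq, huq⟩ := os_unique_inl X e hb hsv t htree (X.r e) hre
  refine ⟨Sum.inr (Sum.inl ()) :: q, ⟨rfl, hq⟩, ?_⟩
  intro p' hp'
  cases p' with
  | nil =>
    have h : (Sum.inr () : X.V ⊕ Unit) = Sum.inl t := hp'
    simp at h
  | cons z p'' =>
    obtain ⟨hz, hrest⟩ := hp'
    have hz' : z = Sum.inr (Sum.inl ()) := os_from_vnew X e hb z hz
    subst hz'
    rw [huq p'' hrest]

end StmtAux
/-- Let `(E, v_0)` be a 1-sink tree extension of a row-finite graph `G`,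
`e` a boundary edge with `s(e) = w₀` not a source of `G`.  Then the Wojciech vector of
the outsplitting `E(e)` satisfies `W_{E(e)} = W_E + (A_G - I) δ_{s(e)}`. -/
theorem stmt3 {V0 Ed0 : Type} [DecidableEq V0] {s0 r0 : Ed0 → V0} (X : GExt s0 r0 1)
    (hrow : RowFinite X.s) (hX : IsNSinkExt X)
    (htree : ∀ v ∈ X.H, ∃! p : List X.Ed, IsPathFrom X.s X.r p v (X.sink 0))
    (e : X.Ed) (hb : X.r e ∉ Set.range X.ιV)
    (w0 : V0) (hw0 : X.s e = X.ιV w0) (hnsrc : ∃ f, r0 f = w0) :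
    ∀ w : V0, (Wvec (X.outsplit e hb) 0 w : ℤ) =
      Wvec X 0 w + AG s0 r0 w w0 - (if w = w0 then 1 else 0) := by
  intro w
  classical
  have hsv : X.s e ∈ Set.range X.ιV := ⟨w0, hw0.symm⟩
  -- counting in X
  have hWX : Wvec X 0 w = {g | X.s g = X.ιV w ∧ X.r g ∈ X.H}.ncard :=
    count_Z X.s X.r X.H (X.ιV w) (X.sink 0) htree
  -- uniqueness of paths in the outsplit graph
  have huniqY : ∀ v ∈ (X.outsplit e hb).H,
      ∃! p : List (X.outsplit e hb).Ed,
        IsPathFrom (X.outsplit e hb).s (X.outsplit e hb).r p v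
          (Sum.inl (X.sink 0)) := by
    intro v hv
    rcases v with v | ⟨⟩
    · have hvH : v ∈ X.H := by
        intro hmem
        obtain ⟨u, hu⟩ := hmem
        exact hv ⟨u, congrArg Sum.inl hu⟩
      exact os_unique_inl X e hb hsv (X.sink 0) htree v hvH
    · exact os_unique_inr X e hb hsv (X.sink 0) htree
  have hWY : Wvec (X.outsplit e hb) 0 w =
      {x : (X.outsplit e hb).Ed | (X.outsplit e hb).s x = Sum.inl (X.ιV w) ∧
        (X.outsplit e hb).r x ∈ (X.outsplit e hb).H}.ncard :=
    count_Z (X.outsplit e hb).s (X.outsplit e hb).r (X.outsplit e hb).H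
      (Sum.inl (X.ιV w)) (Sum.inl (X.sink 0)) huniqY
  -- membership in the H of the outsplit graph
  have hHinl : ∀ v : X.V, (Sum.inl v ∈ (X.outsplit e hb).H) ↔ v ∈ X.H := by
    intro v
    constructor
    · intro h hmem
      obtain ⟨u, hu⟩ := hmem
      exact h ⟨u, congrArg Sum.inl hu⟩
    · intro h hmem
      obtain ⟨u, hu⟩ := hmem
      exact h ⟨u, Sum.inl_injective hu⟩
  have hHinr : (Sum.inr () : (X.outsplit e hb).V) ∈ (X.outsplit e hb).H := by
    rintro ⟨u, hu⟩
    have : (Sum.inl (X.ιV u) : X.V ⊕ Unit) = Sum.inr () := hu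
    simp at this
  -- the sets
  set S : Set X.Ed := {g | X.s g = X.ιV w ∧ X.r g ∈ X.H} with hSdef
  have hSfin : S.Finite := (hrow (X.ιV w)).subset fun g hg => hg.1
  set T0 : Set Ed0 := {f | s0 f = w ∧ r0 f = w0} with hT0def
  set A1 : Set {f : X.Ed // f ≠ e} := {x | X.s x.1 = X.ιV w ∧ X.r x.1 ∈ X.H} with hA1def
  set A2 : Set {f : X.Ed // X.r f = X.s e} := {x | X.s x.1 = X.ιV w} with hA2def
  have hA1fin : A1.Finite := by
    have : A1 = Subtype.val ⁻¹' S := rfl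
    rw [this]
    exact Set.Finite.preimage Subtype.val_injective.injOn hSfin
  have hA2fin : A2.Finite := by
    have : A2 = Subtype.val ⁻¹' {g | X.s g = X.ιV w} := rfl
    rw [this]
    exact Set.Finite.preimage Subtype.val_injective.injOn
      ((hrow (X.ιV w)).subset fun g hg => hg)
  -- decomposition of the edge set of the outsplit graph
  have hS'eq : {x : (X.outsplit e hb).Ed | (X.outsplit e hb).s x = Sum.inl (X.ιV w) ∧
        (X.outsplit e hb).r x ∈ (X.outsplit e hb).H}
      = Sum.inl '' A1 ∪ Sum.inr '' (Sum.inr '' A2) := by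
    ext x
    rcases x with ⟨f, hf⟩ | ⟨⟩ | ⟨f, hf⟩
    · constructor
      · rintro ⟨h1, h2⟩
        have h1' : X.s f = X.ιV w := Sum.inl_injective h1
        have h2' : X.r f ∈ X.H := (hHinl (X.r f)).mp h2
        exact Or.inl ⟨⟨f, hf⟩, ⟨h1', h2'⟩, rfl⟩
      · rintro (⟨⟨g, hg⟩, ⟨hg1, hg2⟩, hgx⟩ | ⟨y, _, hyx⟩)
        · obtain ⟨hgf⟩ : (⟨g, hg⟩ : {f : X.Ed // f ≠ e}) = ⟨f, hf⟩ :=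
            Sum.inl_injective hgx
          exact ⟨congrArg Sum.inl hg1, (hHinl (X.r f)).mpr hg2⟩
        · exact absurd hyx (by simp)
    · constructor
      · rintro ⟨h1, -⟩
        exact absurd h1 (by simp [GExt.outsplit])
      · rintro (⟨y, -, hyx⟩ | ⟨y, ⟨b, -, rfl⟩, hyx⟩)
        · exact absurd hyx (by simp)
        · have := Sum.inr_injective hyx
          simp at this
    · constructor
      · rintro ⟨h1, -⟩
        have h1' : X.s f = X.ιV w := Sum.inl_injective h1
        exact Or.inr ⟨Sum.inr ⟨f, hf⟩, ⟨⟨f, hf⟩, h1', rfl⟩, rfl⟩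
      · rintro (⟨y, _, hyx⟩ | ⟨y, hy, hyx⟩)
        · exact absurd hyx (by simp)
        · obtain ⟨⟨g, hg⟩, hg1, hgy⟩ := hy
          have : y = Sum.inr ⟨f, hf⟩ := Sum.inr_injective hyx
          subst this
          obtain ⟨hgf⟩ : (⟨g, hg⟩ : {f : X.Ed // X.r f = X.s e}) = ⟨f, hf⟩ :=
            Sum.inr_injective hgy
          exact ⟨congrArg Sum.inl hg1, hHinr⟩
  -- counting the decomposition
  have hdisj : Disjoint (Sum.inl '' A1 :
      Set ((X.outsplit e hb).Ed)) (Sum.inr '' (Sum.inr '' A2)) := by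
    rw [Set.disjoint_left]
    rintro x ⟨a, -, rfl⟩ ⟨b, -, h⟩
    simp at h
  have hcard : {x : (X.outsplit e hb).Ed | (X.outsplit e hb).s x = Sum.inl (X.ιV w) ∧
        (X.outsplit e hb).r x ∈ (X.outsplit e hb).H}.ncard
      = A1.ncard + A2.ncard := by
    rw [hS'eq]
    refine (Set.ncard_union_eq hdisj (hA1fin.image _) ((hA2fin.image _).image _)).trans ?_
    exact congrArg₂ (· + ·) (Set.ncard_image_of_injective _ Sum.inl_injective)
      ((Set.ncard_image_of_injective _ Sum.inr_injective).trans
        (Set.ncard_image_of_injective _ Sum.inr_injective))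
  -- A1 counts S minus possibly e
  have hA1card : A1.ncard = (S \ {e}).ncard := by
    rw [← Set.ncard_image_of_injective A1 Subtype.val_injective]
    congr 1
    ext f
    constructor
    · rintro ⟨⟨g, hg⟩, hmem, rfl⟩
      exact ⟨hmem, hg⟩
    · rintro ⟨hmem, hfe⟩
      exact ⟨⟨f, hfe⟩, hmem, rfl⟩
  -- A2 counts T0
  have hA2card : A2.ncard = T0.ncard := by
    rw [← Set.ncard_image_of_injective A2 Subtype.val_injective,
      ← Set.ncard_image_of_injective T0 X.injE]
    congr 1
    ext f
    constructor
    · rintro ⟨⟨g, hg⟩, hmem, rfl⟩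
      have hfr : g ∈ Set.range X.ιE := by
        by_contra hc
        exact (hX.new_edges g hc) ⟨w0, by rw [← hw0, ← hg]⟩
      obtain ⟨f0, rfl⟩ := hfr
      refine ⟨f0, ⟨?_, ?_⟩, rfl⟩
      · exact X.injV (by rw [← X.compat_s]; exact hmem)
      · exact X.injV (by rw [← X.compat_r]; exact hg.trans hw0)
    · rintro ⟨f0, ⟨h1, h2⟩, rfl⟩
      refine ⟨⟨X.ιE f0, ?_⟩, ?_, rfl⟩
      · rw [X.compat_r, h2, ← hw0]
      · show X.s (X.ιE f0) = X.ιV w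
        rw [X.compat_s, h1]
  have hAG : AG s0 r0 w w0 = (T0.ncard : ℤ) := rfl
  rw [hWY, hcard, hWX, hA1card, hA2card, hAG]
  by_cases hww : w = w0
  · subst hww
    have heS : e ∈ S := ⟨hw0, hb⟩
    have h1 : (S \ {e}).ncard + 1 = S.ncard :=
      Set.ncard_diff_singleton_add_one heS hSfin
    rw [if_pos rfl]
    push_cast
    omega
  · have hSe : S \ {e} = S := by
      rw [Set.diff_singleton_eq_self]
      intro heS
      exact hww (X.injV (heS.1.symm ▸ hw0 ▸ rfl))
    rw [if_neg hww, hSe]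
    push_cast
    ring
end

section
/- Let (E, v_0) be a 1-sink tree extension of G, let α = α_1 ⋯ α_k be a path in G with r(α) a boundary vertex of E, and let e be a boundary edge with s(e) = r(α). Then the extension E(e, α) obtained by performing successive boundary outsplittings along α has Wojciech vector W_{E(e,α)} = W_E + Σ_{i=1}^{k} (A_G − I) δ_{r(α_i)}. -/
variable {V0 Ed0 : Type} {s0 r0 : Ed0 → V0} {n : ℕ}

/-- Performing successive boundary outsplittings along a path.  The list `ras` is the
reversed path `[α_k, …, α_1]`: we first outsplit by `e` (whose source is `ιV (r0 α_k)`),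
then by the new copy `α_k'` of `α_k`, and so on back along the path. -/
def alongRev {V0 Ed0 : Type} {s0 r0 : Ed0 → V0} {n : ℕ} :
    (ras : List Ed0) → (X : GExt s0 r0 n) → (e : X.Ed) →
    (hb : X.r e ∉ Set.range X.ιV) →
    (hse : ∀ a ∈ ras.head?, X.s e = X.ιV (r0 a)) →
    (hch : ras.Chain' (fun a b => s0 a = r0 b)) → GExt s0 r0 n
  | [], X, _, _, _, _ => X
  | a :: rest, X, e, hb, hse, hch =>
      alongRev rest (X.outsplit e hb)
        (Sum.inr (Sum.inr ⟨X.ιE a, by rw [X.compat_r]; exact (hse a rfl).symm⟩))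
        (by rintro ⟨v, hv⟩; simp [GExt.outsplit] at hv)
        (by
          intro b hbm
          have h1 : s0 a = r0 b := by
            cases rest with
            | nil => simp at hbm
            | cons c t =>
              have hcb : c = b := by simpa using hbm
              subst hcb
              exact (List.isChain_cons_cons.mp hch).1
          show Sum.inl (X.s (X.ιE a)) = Sum.inl (X.ιV (r0 b))
          rw [X.compat_s, h1])
        hch.tail


section Aux

variable (X : GExt s0 r0 n) (e : X.Ed) (hb : X.r e ∉ Set.range X.ιV)

/-- Collapse of edges of the outsplit graph back to edges of `X`. -/
def col : (X.outsplit e hb).Ed → X.Ed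
  | .inl f => f.1
  | .inr (.inl _) => e
  | .inr (.inr f) => f.1

/-- Projection of vertices of the outsplit graph back to vertices of `X`. -/
def prj : (X.outsplit e hb).V → X.V
  | .inl v => v
  | .inr _ => X.s e

lemma prj_s : ∀ g, prj X e hb ((X.outsplit e hb).s g) = X.s (col X e hb g)
  | .inl _ => rfl
  | .inr (.inl _) => rfl
  | .inr (.inr _) => rfl

lemma prj_r : ∀ g, prj X e hb ((X.outsplit e hb).r g) = X.r (col X e hb g)
  | .inl _ => rfl
  | .inr (.inl _) => rfl
  | .inr (.inr f) => f.2.symm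

lemma isPathFrom_map {V Ed V' Ed' : Type} {s r : Ed → V} {s' r' : Ed' → V'}
    (φ : Ed → Ed') (π : V → V')
    (hs : ∀ g, π (s g) = s' (φ g)) (hr : ∀ g, π (r g) = r' (φ g)) :
    ∀ (p : List Ed) (a b : V), IsPathFrom s r p a b → IsPathFrom s' r' (p.map φ) (π a) (π b) := by
  intro p
  induction p with
  | nil => intro a b h; exact congrArg π h
  | cons g q ih =>
    intro a b h
    refine ⟨(hs g).symm.trans (congrArg π h.1), ?_⟩
    rw [← hr g]
    exact ih _ b h.2

lemma col_path {p a b} (h : IsPathFrom (X.outsplit e hb).s (X.outsplit e hb).r p a b) :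
    IsPathFrom X.s X.r (p.map (col X e hb)) (prj X e hb a) (prj X e hb b) :=
  isPathFrom_map _ _ (prj_s X e hb) (prj_r X e hb) p a b h

lemma mixed_contra (hsv : X.s e ∈ Set.range X.ιV) (f : X.Ed) (hf : X.r f = X.s e)
    (p1 q1 : List (X.outsplit e hb).Ed) (b : (X.outsplit e hb).V)
    (hp : IsPathFrom (X.outsplit e hb).s (X.outsplit e hb).r p1 (Sum.inl (X.r f)) b)
    (hq : IsPathFrom (X.outsplit e hb).s (X.outsplit e hb).r q1 (Sum.inr ()) b)
    (hm : p1.map (col X e hb) = q1.map (col X e hb)) : False := by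
  cases q1 with
  | nil =>
    have hb' : (Sum.inr () : (X.outsplit e hb).V) = b := hq
    cases p1 with
    | nil =>
      have hb2 : (Sum.inl (X.r f) : (X.outsplit e hb).V) = b := hp
      exact Sum.inl_ne_inr (hb2.trans hb'.symm)
    | cons g1 p2 => simp at hm
  | cons g2 q2 =>
    have hg2s : (X.outsplit e hb).s g2 = Sum.inr () := hq.1
    rcases g2 with f2 | (⟨⟩ | f2)
    · exact Sum.inl_ne_inr hg2s
    · -- g2 = e'
      cases p1 with
      | nil => simp at hm
      | cons g1 p2 =>
        simp only [List.map_cons, List.cons.injEq] at hm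
        have hc1 : col X e hb g1 = e := (List.cons.inj hm).1
        have hs1 : (X.outsplit e hb).s g1 = Sum.inl (X.s e) := by
          rw [← hf]; exact hp.1
        rcases g1 with f1 | (⟨⟩ | f1)
        · exact f1.2 hc1
        · exact Sum.inr_ne_inl hs1
        · have h2 : X.r f1.1 = X.s e := f1.2
          have h3 : f1.1 = e := hc1
          rw [h3] at h2
          exact hb (by rw [h2]; exact hsv)
    · exact Sum.inl_ne_inr hg2s

lemma col_inj (hsv : X.s e ∈ Set.range X.ιV) :
    ∀ (p q : List (X.outsplit e hb).Ed) (a b : (X.outsplit e hb).V),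
      IsPathFrom (X.outsplit e hb).s (X.outsplit e hb).r p a b →
      IsPathFrom (X.outsplit e hb).s (X.outsplit e hb).r q a b →
      p.map (col X e hb) = q.map (col X e hb) → p = q := by
  intro p
  induction p with
  | nil =>
    intro q a b _ _ hm
    cases q with
    | nil => rfl
    | cons g q1 => simp at hm
  | cons g1 p1 ih =>
    intro q a b hp hq hm
    cases q with
    | nil => simp at hm
    | cons g2 q1 =>
      simp only [List.map_cons, List.cons.injEq] at hm
      have hss : (X.outsplit e hb).s g1 = (X.outsplit e hb).s g2 := hp.1.trans hq.1.symm
      have hg : g1 = g2 := by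
        rcases g1 with f1 | (⟨⟩ | f1) <;> rcases g2 with f2 | (⟨⟩ | f2)
        · have h1 : f1.1 = f2.1 := hm.1
          exact congrArg Sum.inl (Subtype.ext h1)
        · exact (Sum.inl_ne_inr hss).elim
        · -- inl vs copy : mixed
          exfalso
          have h1 : f1.1 = f2.1 := hm.1
          have hp2 : IsPathFrom (X.outsplit e hb).s (X.outsplit e hb).r p1
              (Sum.inl (X.r f2.1)) b := by rw [← h1]; exact hp.2
          exact mixed_contra X e hb hsv f2.1 f2.2 p1 q1 b hp2 hq.2 hm.2
        · exact (Sum.inr_ne_inl hss).elim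
        · rfl
        · exact (Sum.inr_ne_inl hss).elim
        · -- copy vs inl : mixed, symmetric
          exfalso
          have h1 : f1.1 = f2.1 := hm.1
          have hq2 : IsPathFrom (X.outsplit e hb).s (X.outsplit e hb).r q1
              (Sum.inl (X.r f1.1)) b := by rw [h1]; exact hq.2
          exact mixed_contra X e hb hsv f1.1 f1.2 q1 p1 b hq2 hp.2 hm.2.symm
        · exact (Sum.inl_ne_inr hss).elim
        · have h1 : f1.1 = f2.1 := hm.1
          exact congrArg (fun t => Sum.inr (Sum.inr t)) (Subtype.ext h1)
      subst hg
      rw [ih q1 ((X.outsplit e hb).r g1) b hp.2 hq.2 hm.2]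

lemma lift_ex (hsv : X.s e ∈ Set.range X.ιV) :
    ∀ (m : ℕ) (p : List X.Ed) (a b : X.V), p.length ≤ m → IsPathFrom X.s X.r p a b →
      (∀ q, p ≠ e :: q) →
      ∃ p', IsPathFrom (X.outsplit e hb).s (X.outsplit e hb).r p' (Sum.inl a) (Sum.inl b) ∧
        p'.map (col X e hb) = p := by
  intro m
  induction m with
  | zero =>
    intro p a b hl hp _
    have hpn : p = [] := List.length_eq_zero_iff.mp (Nat.le_zero.mp hl)
    subst hpn
    exact ⟨[], congrArg Sum.inl hp, rfl⟩
  | succ m ih =>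
    intro p a b hl hp hne
    cases p with
    | nil => exact ⟨[], congrArg Sum.inl hp, rfl⟩
    | cons g q =>
      have hg : g ≠ e := fun h => hne q (by rw [h])
      by_cases hqe : ∃ q2, q = e :: q2
      · obtain ⟨q2, rfl⟩ := hqe
        have hrg : X.r g = X.s e := hp.2.1.symm
        have hq2 : ∀ q3, q2 ≠ e :: q3 := by
          intro q3 hq3
          subst hq3
          have : X.s e = X.r e := hp.2.2.1
          exact hb (by rw [← this]; exact hsv)
        have hlen : q2.length ≤ m := by
          simp only [List.length_cons] at hl; omega
        obtain ⟨p2, hp2, hm2⟩ := ih q2 (X.r e) b hlen hp.2.2 hq2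
        refine ⟨Sum.inr (Sum.inr ⟨g, hrg⟩) :: Sum.inr (Sum.inl ()) :: p2, ?_, ?_⟩
        · exact ⟨congrArg Sum.inl hp.1, rfl, hp2⟩
        · exact congrArg (fun t => g :: e :: t) hm2
      · have hq : ∀ q2, q ≠ e :: q2 := fun q2 h => hqe ⟨q2, h⟩
        have hlen : q.length ≤ m := by
          simp only [List.length_cons] at hl; omega
        obtain ⟨p2, hp2, hm2⟩ := ih q (X.r g) b hlen hp.2 hq
        exact ⟨Sum.inl ⟨g, hg⟩ :: p2, ⟨congrArg Sum.inl hp.1, hp2⟩,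
          congrArg (List.cons g) hm2⟩

end Aux


section Aux2

variable (X : GExt s0 r0 n) (e : X.Ed) (hb : X.r e ∉ Set.range X.ιV)

lemma sink_outsplit (i : Fin n) : (X.outsplit e hb).sink i = Sum.inl (X.sink i) := rfl

lemma htree_outsplit (i : Fin n) (hsv : X.s e ∈ Set.range X.ιV)
    (ht : ∀ v ∉ Set.range X.ιV, ∃! p, IsPathFrom X.s X.r p v (X.sink i)) :
    ∀ v' ∉ Set.range (X.outsplit e hb).ιV,
      ∃! p', IsPathFrom (X.outsplit e hb).s (X.outsplit e hb).r p' v'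
        ((X.outsplit e hb).sink i) := by
  intro v' hv'
  rcases v' with x | ⟨⟩
  · have hx : x ∉ Set.range X.ιV := by
      rintro ⟨v, hv⟩
      exact hv' ⟨v, congrArg Sum.inl hv⟩
    obtain ⟨p, hp, hpu⟩ := ht x hx
    have hpe : ∀ q, p ≠ e :: q := by
      intro q hq
      rw [hq] at hp
      exact hx (hp.1 ▸ hsv)
    obtain ⟨p', hp', hm'⟩ := lift_ex X e hb hsv p.length p x (X.sink i) le_rfl hp hpe
    refine ⟨p', hp', ?_⟩
    intro q' hq'
    have h1 := col_path X e hb hq'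
    have h2 : q'.map (col X e hb) = p := hpu _ h1
    exact col_inj X e hb hsv q' p' _ _ hq' hp' (h2.trans hm'.symm)
  · obtain ⟨p, hp, hpu⟩ := ht (X.r e) hb
    have hpe : ∀ q, p ≠ e :: q := by
      intro q hq
      rw [hq] at hp
      exact hb (hp.1 ▸ hsv)
    obtain ⟨p', hp', hm'⟩ := lift_ex X e hb hsv p.length p (X.r e) (X.sink i) le_rfl hp hpe
    refine ⟨Sum.inr (Sum.inl ()) :: p', ⟨rfl, hp'⟩, ?_⟩
    intro q' hq'
    cases q' with
    | nil => exact (Sum.inr_ne_inl hq').elim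
    | cons g q1 =>
      have hgs : (X.outsplit e hb).s g = Sum.inr () := hq'.1
      rcases g with f | (⟨⟩ | f)
      · exact (Sum.inl_ne_inr hgs).elim
      · have h1 := col_path X e hb hq'.2
        have h2 : q1.map (col X e hb) = p := hpu _ h1
        rw [col_inj X e hb hsv q1 p' _ _ hq'.2 hp' (h2.trans hm'.symm)]
      · exact (Sum.inl_ne_inr hgs).elim

open Classical in
noncomputable def j1 : X.Ed → (X.outsplit e hb).Ed := fun g =>
  if h : g = e then Sum.inr (Sum.inl ()) else Sum.inl ⟨g, h⟩

open Classical in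
noncomputable def j2 : X.Ed → (X.outsplit e hb).Ed := fun g =>
  if h : X.r g = X.s e then Sum.inr (Sum.inr ⟨g, h⟩) else Sum.inr (Sum.inl ())

lemma j1_ne {g : X.Ed} (h : g ≠ e) : j1 X e hb g = Sum.inl ⟨g, h⟩ := by
  unfold j1; exact dif_neg h

lemma j2_pos {g : X.Ed} (h : X.r g = X.s e) : j2 X e hb g = Sum.inr (Sum.inr ⟨g, h⟩) := by
  unfold j2; exact dif_pos h

lemma rowfin_outsplit (hrow : RowFinite X.s) : RowFinite (X.outsplit e hb).s := by
  intro x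
  have hsub : {g' | (X.outsplit e hb).s g' = x} ⊆
      j1 X e hb '' {g | X.s g = prj X e hb x} ∪
      (j2 X e hb '' {g | X.s g = prj X e hb x} ∪ {Sum.inr (Sum.inl ())}) := by
    intro g' hg'
    have hmem : X.s (col X e hb g') = prj X e hb x := by
      rw [← prj_s X e hb g', hg']
    rcases g' with f | (⟨⟩ | f)
    · left
      exact ⟨f.1, hmem, j1_ne X e hb f.2⟩
    · right; right; rfl
    · right; left
      exact ⟨f.1, hmem, j2_pos X e hb f.2⟩
  exact Set.Finite.subset (((hrow _).image _).union
    (((hrow _).image _).union (Set.finite_singleton _))) hsub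

lemma newE_outsplit (h : ∀ f, f ∉ Set.range X.ιE → X.r f ∉ Set.range X.ιV) :
    ∀ f', f' ∉ Set.range (X.outsplit e hb).ιE →
      (X.outsplit e hb).r f' ∉ Set.range (X.outsplit e hb).ιV := by
  intro f' hf'
  rcases f' with f | (⟨⟩ | f)
  · have hfr : f.1 ∉ Set.range X.ιE := by
      rintro ⟨g0, hg0⟩
      exact hf' ⟨g0, congrArg Sum.inl (Subtype.ext hg0)⟩
    have h2 := h f.1 hfr
    rintro ⟨v, hv⟩
    exact h2 ⟨v, Sum.inl.inj hv⟩
  · rintro ⟨v, hv⟩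
    exact hb ⟨v, Sum.inl.inj hv⟩
  · rintro ⟨v, hv⟩
    exact Sum.inl_ne_inr hv

/-- The set of boundary edges out of `ιV w`. -/
def bset (X : GExt s0 r0 n) (w : V0) : Set X.Ed := {g | X.s g = X.ιV w ∧ X.r g ∈ X.H}

lemma bset_fin (hrow : RowFinite X.s) (w : V0) : (bset X w).Finite :=
  (hrow (X.ιV w)).subset fun _ hg => hg.1

open Classical in
/-- The (unique) path to the sink, by choice. -/
noncomputable def tp (X : GExt s0 r0 n) (i : Fin n) (v : X.V) : List X.Ed :=
  if h : ∃ p, IsPathFrom X.s X.r p v (X.sink i) then h.choose else []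

lemma wvec_eq (X : GExt s0 r0 1)
    (ht : ∀ v ∉ Set.range X.ιV, ∃! p, IsPathFrom X.s X.r p v (X.sink 0)) (w : V0) :
    Wvec X 0 w = (bset X w).ncard := by
  have himg : ZE X w 0 = (fun g => g :: tp X 0 (X.r g)) '' bset X w := by
    ext p
    constructor
    · rintro ⟨hne, hp, hh⟩
      cases p with
      | nil => exact absurd rfl hne
      | cons g q =>
        have hH : X.r g ∈ X.H := hh g rfl
        have hu := ht (X.r g) hH
        have hq : q = tp X 0 (X.r g) := by
          have hex : ∃ p, IsPathFrom X.s X.r p (X.r g) (X.sink 0) := ⟨q, hp.2⟩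
          unfold tp
          rw [dif_pos hex]
          exact hu.unique hp.2 hex.choose_spec
        exact ⟨g, ⟨hp.1, hH⟩, congrArg (List.cons g) hq.symm⟩
    · rintro ⟨g, ⟨hs, hH⟩, rfl⟩
      refine ⟨by simp, ⟨hs, ?_⟩, ?_⟩
      · unfold tp
        have hex : ∃ p, IsPathFrom X.s X.r p (X.r g) (X.sink 0) := (ht _ hH).exists
        rw [dif_pos hex]
        exact hex.choose_spec
      · intro f hf
        have hfg : g = f := by simpa using hf
        rw [← hfg]
        exact hH
  rw [Wvec, himg, Set.ncard_image_of_injOn]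
  intro g1 _ g2 _ h
  exact (List.cons_eq_cons.mp h).1

lemma bset_outsplit (w : V0) :
    bset (X.outsplit e hb) w =
      j1 X e hb '' (bset X w \ {e}) ∪
      j2 X e hb '' {f | X.s f = X.ιV w ∧ X.r f = X.s e} := by
  ext g'
  constructor
  · rintro ⟨hs', hr'⟩
    rcases g' with f | (⟨⟩ | f)
    · left
      refine ⟨f.1, ⟨⟨Sum.inl.inj hs', ?_⟩, f.2⟩, j1_ne X e hb f.2⟩
      rintro ⟨v, hv⟩
      exact hr' ⟨v, congrArg Sum.inl hv⟩
    · exact absurd hs' (by exact Sum.inr_ne_inl)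
    · right
      exact ⟨f.1, ⟨Sum.inl.inj hs', f.2⟩, j2_pos X e hb f.2⟩
  · rintro (⟨g, ⟨⟨hs, hH⟩, hne⟩, rfl⟩ | ⟨f, ⟨hs, hr⟩, rfl⟩)
    · have hne' : g ≠ e := hne
      rw [j1_ne X e hb hne']
      exact ⟨congrArg Sum.inl hs, by rintro ⟨v, hv⟩; exact hH ⟨v, Sum.inl.inj hv⟩⟩
    · rw [j2_pos X e hb hr]
      exact ⟨congrArg Sum.inl hs, by rintro ⟨v, hv⟩; exact Sum.inl_ne_inr hv⟩

lemma step_card (hrow : RowFinite X.s)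
    (hnewE : ∀ f, f ∉ Set.range X.ιE → X.r f ∉ Set.range X.ιV)
    [DecidableEq V0] (u : V0) (hseu : X.s e = X.ιV u) (w : V0) :
    ((bset (X.outsplit e hb) w).ncard : ℤ) =
      (bset X w).ncard + AG s0 r0 w u - (if w = u then 1 else 0) := by
  have hfin : (bset X w).Finite := bset_fin X hrow w
  have hS2fin : {f | X.s f = X.ιV w ∧ X.r f = X.s e}.Finite :=
    (hrow _).subset fun f hf => hf.1
  have hS2 : {f | X.s f = X.ιV w ∧ X.r f = X.s e} =
      X.ιE '' {g0 | s0 g0 = w ∧ r0 g0 = u} := by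
    ext f
    constructor
    · rintro ⟨hs, hr⟩
      rcases Classical.em (f ∈ Set.range X.ιE) with ⟨g0, rfl⟩ | hf
      · refine ⟨g0, ⟨X.injV ?_, X.injV ?_⟩, rfl⟩
        · rw [← X.compat_s]; exact hs
        · rw [← X.compat_r]; exact hr.trans hseu
      · exact absurd ⟨u, (hr.trans hseu).symm⟩ (hnewE f hf)
    · rintro ⟨g0, ⟨h1, h2⟩, rfl⟩
      exact ⟨by rw [X.compat_s, h1], by rw [X.compat_r, h2, hseu]⟩
  have hS2card : {f | X.s f = X.ιV w ∧ X.r f = X.s e}.ncard =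
      {g0 | s0 g0 = w ∧ r0 g0 = u}.ncard := by
    rw [hS2]; exact Set.ncard_image_of_injective _ X.injE
  have hdisj : Disjoint (j1 X e hb '' (bset X w \ {e}))
      (j2 X e hb '' {f | X.s f = X.ιV w ∧ X.r f = X.s e}) := by
    rw [Set.disjoint_left]
    rintro x ⟨g, ⟨_, hne⟩, rfl⟩ ⟨f, ⟨_, hr⟩, hx⟩
    have hne' : g ≠ e := hne
    rw [j1_ne X e hb hne', j2_pos X e hb hr] at hx
    exact Sum.inr_ne_inl hx
  have hinj1 : Set.InjOn (j1 X e hb) (bset X w \ {e}) := by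
    rintro g1 ⟨_, h1⟩ g2 ⟨_, h2⟩ heq
    have h1' : g1 ≠ e := h1
    have h2' : g2 ≠ e := h2
    rw [j1_ne X e hb h1', j1_ne X e hb h2'] at heq
    exact congrArg Subtype.val (Sum.inl_injective heq)
  have hinj2 : Set.InjOn (j2 X e hb) {f | X.s f = X.ιV w ∧ X.r f = X.s e} := by
    rintro g1 ⟨_, h1⟩ g2 ⟨_, h2⟩ heq
    rw [j2_pos X e hb h1, j2_pos X e hb h2] at heq
    exact congrArg Subtype.val (Sum.inr_injective (Sum.inr_injective heq))
  rw [bset_outsplit, Set.ncard_union_eq hdisj ((hfin.diff).image _) (hS2fin.image _),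
    Set.ncard_image_of_injOn hinj1, Set.ncard_image_of_injOn hinj2, hS2card]
  have hAG : AG s0 r0 w u = ({g0 | s0 g0 = w ∧ r0 g0 = u}.ncard : ℤ) := by
    simp [AG]
  by_cases hw : w = u
  · subst hw
    have he : e ∈ bset X w := ⟨hseu, hb⟩
    have hpos : 0 < (bset X w).ncard := (Set.ncard_pos hfin).mpr ⟨e, he⟩
    rw [Set.ncard_diff_singleton_of_mem he, if_pos rfl, hAG]
    push_cast [Nat.cast_sub hpos]
    ring
  · have he : e ∉ bset X w := fun hmem => hw (X.injV (hmem.1.symm.trans hseu))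
    rw [Set.diff_singleton_eq_self he, if_neg hw, hAG]
    push_cast
    ring

end Aux2


lemma main_alongRev {V0 Ed0 : Type} [DecidableEq V0] {s0 r0 : Ed0 → V0} (w : V0) :
    ∀ (ras : List Ed0) (X : GExt s0 r0 1) (e : X.Ed)
      (hb : X.r e ∉ Set.range X.ιV)
      (hse : ∀ a ∈ ras.head?, X.s e = X.ιV (r0 a))
      (hch : ras.Chain' (fun a b => s0 a = r0 b)),
      RowFinite X.s →
      (∀ v ∉ Set.range X.ιV, ∃! p, IsPathFrom X.s X.r p v (X.sink 0)) →
      (∀ f, f ∉ Set.range X.ιE → X.r f ∉ Set.range X.ιV) →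
      (Wvec (alongRev ras X e hb hse hch) 0 w : ℤ) =
        Wvec X 0 w +
          (ras.map (fun a => AG s0 r0 w (r0 a) - if w = r0 a then 1 else 0)).sum := by
  intro ras
  induction ras with
  | nil =>
    intro X e hb hse hch _ _ _
    simp [alongRev]
  | cons a rest ih =>
    intro X e hb hse hch hrow ht hnE
    have hseu : X.s e = X.ιV (r0 a) := hse a rfl
    have hsv : X.s e ∈ Set.range X.ιV := ⟨_, hseu.symm⟩
    simp only [alongRev]
    refine (ih _ _ _ _ _ (rowfin_outsplit X e hb hrow) (htree_outsplit X e hb 0 hsv ht)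
      (newE_outsplit X e hb hnE)).trans ?_
    have key : (Wvec (X.outsplit e hb) 0 w : ℤ) =
        Wvec X 0 w + (AG s0 r0 w (r0 a) - if w = r0 a then 1 else 0) := by
      rw [wvec_eq _ (htree_outsplit X e hb 0 hsv ht), wvec_eq X ht,
        step_card X e hb hrow hnE (r0 a) hseu w]
      ring
    rw [key, List.map_cons, List.sum_cons]
    ring

/-- Let `(E, v_0)` be a 1-sink tree extension of `G`, `α = α_1 ⋯ α_k` a
path in `G` ending at a boundary vertex, and `e` a boundary edge with `s(e) = r(α)`
(where the source of each outsplitting is not a source of `G`).  The graph `E(e, α)`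
obtained by performing successive boundary outsplittings along `α` satisfies
`W_{E(e,α)} = W_E + Σ_{i=1}^{k} (A_G - I) δ_{r(α_i)}`. -/
theorem stmt4 {V0 Ed0 : Type} [DecidableEq V0] {s0 r0 : Ed0 → V0} (X : GExt s0 r0 1)
    (hrow : RowFinite X.s) (hX : IsNSinkExt X)
    (htree : ∀ v ∈ X.H, ∃! p : List X.Ed, IsPathFrom X.s X.r p v (X.sink 0))
    (α : List Ed0) (e : X.Ed)
    (hb : X.r e ∉ Set.range X.ιV)
    (hbv : X.s e ∈ Set.range X.ιV)
    (hse : ∀ a ∈ α.reverse.head?, X.s e = X.ιV (r0 a))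
    (hch : α.reverse.Chain' (fun a b => s0 a = r0 b))
    (hnsrc : ∀ a ∈ α, ∃ f, r0 f = r0 a) :
    ∀ w : V0, (Wvec (alongRev α.reverse X e hb hse hch) 0 w : ℤ) =
      Wvec X 0 w +
        (α.map (fun a => AG s0 r0 w (r0 a) - if w = r0 a then 1 else 0)).sum := by
  intro w
  have ht' : ∀ v ∉ Set.range X.ιV, ∃! p, IsPathFrom X.s X.r p v (X.sink 0) :=
    fun v hv => htree v hv
  have hnE : ∀ f, f ∉ Set.range X.ιE → X.r f ∉ Set.range X.ιV :=
    fun f hf => hX.new_edges f hf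
  rw [main_alongRev w α.reverse X e hb hse hch hrow ht' hnE]
  congr 1
  rw [List.map_reverse, List.sum_reverse]
end

section
/- Let (E, v_0) be an n-sink extension of G and let SE be its simplification. Then SE is a simple n-sink extension of G and has the same Wojciech vectors as E: W_{(SE; v_i)} = W_{(E; v_i)} for all i. -/
variable {V0 Ed0 : Type} {s0 r0 : Ed0 → V0} {n : ℕ}

/-- The simplification `SE` of an `n`-sink extension: vertices `G^0 ∪ {v_1, …, v_n}`,
edges of `G` together with one new edge `w → v_i` for each path `α ∈ Z(w, v_i)`. -/
def GExt.simplify {V0 Ed0 : Type} {s0 r0 : Ed0 → V0} {n : ℕ} (X : GExt s0 r0 n) :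
    GExt s0 r0 n where
  V := V0 ⊕ Fin n
  Ed := Ed0 ⊕ (Σ w : V0, Σ i : Fin n, {p : List X.Ed // p ∈ ZE X w i})
  s := Sum.elim (fun f => Sum.inl (s0 f)) (fun q => Sum.inl q.1)
  r := Sum.elim (fun f => Sum.inl (r0 f)) (fun q => Sum.inr q.2.1)
  ιV := Sum.inl
  ιE := Sum.inl
  sink := Sum.inr
  injV := Sum.inl_injective
  injE := Sum.inl_injective
  compat_s := fun _ => rfl
  compat_r := fun _ => rfl

section Aux

variable {V Ed : Type} {s r : Ed → V}

lemma isPathFrom_append {p q : List Ed} {a b c : V}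
    (hp : IsPathFrom s r p a b) (hq : IsPathFrom s r q b c) :
    IsPathFrom s r (p ++ q) a c := by
  induction p generalizing a with
  | nil => cases hp; simpa using hq
  | cons e t ih => exact ⟨hp.1, ih hp.2⟩

lemma exists_boundary_path {V0 Ed0 : Type} {s0 r0 : Ed0 → V0} {n : ℕ}
    (X : GExt s0 r0 n) (hX : IsNSinkExt X) :
    ∀ v ∈ X.H, ∃ (w : V0) (p : List X.Ed), p ≠ [] ∧
      IsPathFrom X.s X.r p (X.ιV w) v ∧ ∀ e ∈ p.head?, X.r e ∈ X.H := by
  set R : X.V → X.V → Prop := fun a b => a ∈ X.H ∧ b ∈ X.H ∧ Step X.s X.r a b with hR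
  haveI : IsStrictOrder X.V (Relation.TransGen R) :=
    { irrefl := fun a h => hX.no_loops ⟨a, h⟩
      trans := fun _ _ _ => Relation.TransGen.trans }
  have hwf : X.H.WellFoundedOn (Relation.TransGen R) := hX.H_finite.wellFoundedOn
  intro v hv
  refine hwf.induction (P := fun v => ∃ w p, p ≠ [] ∧
    IsPathFrom X.s X.r p (X.ιV w) v ∧ ∀ e ∈ p.head?, X.r e ∈ X.H) hv ?_
  rintro v hv ih
  obtain ⟨e, he⟩ := hX.no_sources v hv
  by_cases hs : X.s e ∈ Set.range X.ιV
  · obtain ⟨w, hw⟩ := hs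
    exact ⟨w, [e], by simp, ⟨hw.symm ▸ rfl, he⟩, by simp [he ▸ hv]⟩
  · have hsH : X.s e ∈ X.H := hs
    obtain ⟨w, p, hne, hpath, hhead⟩ :=
      ih (X.s e) hsH (Relation.TransGen.single ⟨hsH, hv, e, rfl, he⟩)
    refine ⟨w, p ++ [e], by simp, isPathFrom_append hpath ⟨rfl, he⟩, ?_⟩
    intro f hf
    apply hhead
    rcases p with _ | ⟨g, t⟩
    · exact absurd rfl hne
    · simpa using hf

end Aux


/-- The simplification `SE` of an `n`-sink extension `(E, v_i)` of `G` is a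
simple `n`-sink extension of `G` with the same Wojciech vectors as `E`. -/
theorem stmt5 {V0 Ed0 : Type} {s0 r0 : Ed0 → V0} {n : ℕ} (X : GExt s0 r0 n)
    (hrow : RowFinite X.s) (hX : IsNSinkExt X) :
    IsNSinkExt X.simplify ∧ Simple X.simplify ∧
      ∀ i w, Wvec X.simplify i w = Wvec X i w := by
  have hHS : X.simplify.H = Set.range (Sum.inr : Fin n → V0 ⊕ Fin n) := by
    ext v; show v ∈ (Set.range (Sum.inl : V0 → V0 ⊕ Fin n))ᶜ ↔ v ∈ Set.range (Sum.inr : Fin n → V0 ⊕ Fin n); cases v <;> simp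
  have hstep : ∀ a b : X.simplify.V,
      ¬(a ∈ X.simplify.H ∧ b ∈ X.simplify.H ∧ Step X.simplify.s X.simplify.r a b) := by
    rintro a b ⟨ha, -, e, hse, -⟩
    cases e with
    | inl f => exact ha ⟨s0 f, hse⟩
    | inr q => exact ha ⟨q.1, hse⟩
  refine ⟨?_, ?_, ?_⟩
  · refine ⟨?_, ?_, ?_, ?_, ?_, ?_, ?_, ?_, ?_⟩
    · rw [hHS]; exact Set.finite_range _
    · intro v hv
      rw [hHS] at hv
      obtain ⟨i, rfl⟩ := hv
      obtain ⟨w, p, hne, hpath, hhead⟩ :=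
        exists_boundary_path X hX (X.sink i) (hX.sink_mem i)
      exact ⟨Sum.inr ⟨w, i, ⟨p, hne, hpath, hhead⟩⟩, rfl⟩
    · intro i; rw [hHS]; exact ⟨i, rfl⟩
    · rintro i (f | q) h
      · exact absurd h (by simp [GExt.simplify])
      · exact absurd h (by simp [GExt.simplify])
    · exact fun a b h => Sum.inr_injective h
    · intro v hv _
      rw [hHS] at hv
      obtain ⟨i, rfl⟩ := hv
      exact ⟨i, rfl⟩
    · rintro ⟨v, h⟩
      cases h with
      | single h' => exact hstep _ _ h'
      | tail _ h' => exact hstep _ _ h'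
    · rintro (f | q) h
      · exact absurd ⟨f, rfl⟩ h
      · rw [hHS]; exact ⟨q.2.1, rfl⟩
    · intro v hv e he
      cases e with
      | inl f => exact hv f (Sum.inl_injective he)
      | inr q =>
        obtain ⟨w', i', p, hp⟩ := q
        have hw : w' = v := Sum.inl_injective he
        subst hw
        obtain ⟨hne, hpath, -⟩ := hp
        rcases p with _ | ⟨e0, t⟩
        · exact hne rfl
        · exact hX.g_sinks w' hv e0 hpath.1
  · ext v
    rcases v with v | i
    · exact iff_of_true (Or.inl ⟨v, rfl⟩) trivial
    · exact iff_of_true (Or.inr ⟨i, rfl⟩) trivial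
  · intro i w
    have hmem : ∀ p : {p : List X.Ed // p ∈ ZE X w i},
        [Sum.inr ⟨w, i, p⟩] ∈ ZE X.simplify w i := by
      intro p
      refine ⟨List.cons_ne_nil _ _, ⟨rfl, rfl⟩, ?_⟩
      intro e he
      obtain rfl : _ = e := Option.some.inj he
      rw [hHS]
      exact ⟨i, rfl⟩
    set g : {p : List X.Ed // p ∈ ZE X w i} → {q // q ∈ ZE X.simplify w i} :=
      fun p => ⟨[Sum.inr ⟨w, i, p⟩], hmem p⟩ with hg
    have hbij : Function.Bijective g := by
      constructor
      · intro p p' h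
        have h1 := congrArg Subtype.val h
        simp only [hg, List.cons.injEq, and_true] at h1
        have h2 := Sum.inr_injective (List.cons.inj h1).1
        injection h2 with ha hb
        injection hb with hc hd
      · rintro ⟨q, hne, hpath, hhead⟩
        rcases q with _ | ⟨e, t⟩
        · exact absurd rfl hne
        cases e with
        | inl f =>
          exact absurd (hhead (Sum.inl f) rfl) (by rw [hHS]; rintro ⟨j, hj⟩; exact Sum.inr_ne_inl hj)
        | inr q =>
          obtain ⟨w', i', p⟩ := q
          have hw : w' = w := Sum.inl_injective hpath.1
          subst hw
          rcases t with _ | ⟨e2, t2⟩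
          · have hi : i' = i := Sum.inr_injective hpath.2
            subst hi
            exact ⟨p, rfl⟩
          · exact absurd (hpath.2.1) (by cases e2 <;> simp [GExt.simplify])
    unfold Wvec
    rw [← Nat.card_coe_set_eq, ← Nat.card_coe_set_eq]
    exact (Nat.card_congr (Equiv.ofBijective g hbij)).symm
end

section
/- Let (E, v_0) be a 1-sink extension of G and let e be a boundary edge of E with s(e) not a source of G. Then the closures of the sink v_0 in E and in the boundary outsplitting E(e) coincide: a maximal tail γ in G satisfies γ ≥ v_0 in E if and only if γ ≥ v_0 in E(e). -/
variable {V0 Ed0 : Type} {s0 r0 : Ed0 → V0} {n : ℕ}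

/-- A maximal tail in the graph `G`. -/
structure MaximalTail {V Ed : Type} (s r : Ed → V) (γ : Set V) : Prop where
  nonempty : γ.Nonempty
  cofinal : ∀ v ∈ γ, ∀ w ∈ γ, ∃ u ∈ γ, Reaches s r v u ∧ Reaches s r w u
  back_hereditary : ∀ v w, Reaches s r v w → w ∈ γ → v ∈ γ
  no_sinks : ∀ w ∈ γ, ∃ e, s e = w ∧ r e ∈ γ

/-- Mapping a path in `E` to a path in `E(e)`: either it lifts directly, or the
path starts at `s e` with the edge `e`, in which case `v'` reaches the endpoint. -/
lemma outsplit_claim {V0 Ed0 : Type} {s0 r0 : Ed0 → V0} {n : ℕ} (X : GExt s0 r0 n)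
    (e : X.Ed) (hb : X.r e ∉ Set.range X.ιV) :
    ∀ a b : X.V, Reaches X.s X.r a b →
      Reaches (X.outsplit e hb).s (X.outsplit e hb).r (Sum.inl a) (Sum.inl b) ∨
      (a = X.s e ∧
        Reaches (X.outsplit e hb).s (X.outsplit e hb).r (Sum.inr ()) (Sum.inl b)) := by
  intro a b h
  induction h using Relation.ReflTransGen.head_induction_on with
  | refl => exact Or.inl Relation.ReflTransGen.refl
  | head hst _ ih =>
    obtain ⟨f, hs, hr⟩ := hst
    by_cases hfe : f = e
    · subst hfe
      rcases ih with ih | ⟨_, ih⟩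
      · refine Or.inr ⟨hs.symm, Relation.ReflTransGen.head ⟨Sum.inr (Sum.inl ()), rfl, rfl⟩ ?_⟩
        show Relation.ReflTransGen _ (Sum.inl (X.r f)) _
        exact hr ▸ ih
      · exact Or.inr ⟨hs.symm, ih⟩
    · rcases ih with ih | ⟨hc, ih⟩
      · exact Or.inl (Relation.ReflTransGen.head
          ⟨Sum.inl ⟨f, hfe⟩, congrArg Sum.inl hs, congrArg Sum.inl hr⟩ ih)
      · exact Or.inl (Relation.ReflTransGen.head
          ⟨Sum.inr (Sum.inr ⟨f, hr.trans hc⟩), congrArg Sum.inl hs, rfl⟩ ih)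

/-- Mapping a path in `E(e)` back to a path in `E` (collapse `v'` to `s e`). -/
lemma outsplit_down {V0 Ed0 : Type} {s0 r0 : Ed0 → V0} {n : ℕ} (X : GExt s0 r0 n)
    (e : X.Ed) (hb : X.r e ∉ Set.range X.ιV) (a b : (X.outsplit e hb).V)
    (h : Reaches (X.outsplit e hb).s (X.outsplit e hb).r a b) :
    Reaches X.s X.r (Sum.elim id (fun _ => X.s e) a) (Sum.elim id (fun _ => X.s e) b) := by
  refine Relation.ReflTransGen.lift (Sum.elim id (fun _ => X.s e)) ?_ _ _ h
  rintro x y ⟨ed, hs, hr⟩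
  rcases ed with ⟨f, hf⟩ | u | ⟨f, hf⟩
  · exact ⟨f, by rw [← hs]; rfl, by rw [← hr]; rfl⟩
  · exact ⟨e, by rw [← hs]; rfl, by rw [← hr]; rfl⟩
  · exact ⟨f, by rw [← hs]; rfl, by rw [← hr]; exact hf⟩

/-- Let `(E, v_0)` be a 1-sink extension of `G` and `e` a boundary edge of
`E` whose source is not a source of `G`.  A maximal tail `γ` in `G` satisfies `γ ≥ v_0`
in `E` if and only if `γ ≥ v_0` in the boundary outsplitting `E(e)`; hence the closures
of `v_0` in `E` and in `E(e)` coincide. -/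
theorem stmt6 {V0 Ed0 : Type} {s0 r0 : Ed0 → V0} (X : GExt s0 r0 1)
    (hrow : RowFinite X.s) (hX : IsNSinkExt X)
    (e : X.Ed) (hb : X.r e ∉ Set.range X.ιV) (hbv : X.s e ∈ Set.range X.ιV)
    (hnsrc : ∀ w : V0, X.s e = X.ιV w → ∃ f, r0 f = w)
    (γ : Set V0) (hγ : MaximalTail s0 r0 γ) :
    (∀ v ∈ γ, Reaches X.s X.r (X.ιV v) (X.sink 0)) ↔
      (∀ v ∈ γ, Reaches (X.outsplit e hb).s (X.outsplit e hb).r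
        ((X.outsplit e hb).ιV v) ((X.outsplit e hb).sink 0)) := by
  constructor
  · intro h v hv
    rcases outsplit_claim X e hb (X.ιV v) (X.sink 0) (h v hv) with hL | ⟨ha, hR⟩
    · exact hL
    · -- the path starts at `s e` with edge `e`; use an edge of γ out of `v`
      obtain ⟨g0, hg0s, hg0r⟩ := hγ.no_sinks v hv
      rcases outsplit_claim X e hb (X.ιV (r0 g0)) (X.sink 0) (h _ hg0r) with hL2 | ⟨ha2, hR2⟩
      · have hne : X.ιE g0 ≠ e := fun hh =>
          hb (hh ▸ (X.compat_r g0 ▸ Set.mem_range_self (r0 g0)))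
        refine Relation.ReflTransGen.head ⟨Sum.inl ⟨X.ιE g0, hne⟩, ?_, ?_⟩ hL2
        · show Sum.inl (X.s (X.ιE g0)) = _
          rw [X.compat_s, hg0s]; rfl
        · show Sum.inl (X.r (X.ιE g0)) = _
          rw [X.compat_r]
      · have hrg : X.r (X.ιE g0) = X.s e := by rw [X.compat_r, ha2]
        refine Relation.ReflTransGen.head ⟨Sum.inr (Sum.inr ⟨X.ιE g0, hrg⟩), ?_, rfl⟩ hR2
        show Sum.inl (X.s (X.ιE g0)) = _
        rw [X.compat_s, hg0s]; rfl
  · intro h v hv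
    exact outsplit_down X e hb _ _ (h v hv)
end

section
/- Let (F, w_n) be a simple n-sink extension of G with sinks w_1, …, w_n. Define F \ w_n := (F^0 \ {w_n}, F^1 \ r^{−1}(w_n)). Then F \ w_n is a simple (n−1)-sink extension of G, and (F \ w_n) * W_{(F; w_n)} is isomorphic to F as a graph over G (i.e., by an isomorphism fixing G and the sinks). -/
variable {V0 Ed0 : Type} {s0 r0 : Ed0 → V0} {n : ℕ}

/-- `E*m`: adjoin one new sink `v_{n+1}` and `m(w)` edges from each `w ∈ G^0` to it. -/
def GExt.star {V0 Ed0 : Type} {s0 r0 : Ed0 → V0} {n : ℕ} (X : GExt s0 r0 n)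
    (m : V0 → ℕ) : GExt s0 r0 (n + 1) where
  V := X.V ⊕ Unit
  Ed := X.Ed ⊕ (Σ w : V0, Fin (m w))
  s := Sum.elim (fun e => Sum.inl (X.s e)) (fun q => Sum.inl (X.ιV q.1))
  r := Sum.elim (fun e => Sum.inl (X.r e)) (fun _ => Sum.inr ())
  ιV := fun v => Sum.inl (X.ιV v)
  ιE := fun f => Sum.inl (X.ιE f)
  sink := Fin.snoc (fun i => Sum.inl (X.sink i)) (Sum.inr ())
  injV := fun a b h => X.injV (Sum.inl_injective h)
  injE := fun a b h => X.injE (Sum.inl_injective h)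
  compat_s := fun f => by simp [X.compat_s]
  compat_r := fun f => by simp [X.compat_r]

/-- Deleting the last sink `w_{n+1}` and all edges into it. -/
def GExt.deleteLast {V0 Ed0 : Type} {s0 r0 : Ed0 → V0} {n : ℕ} (X : GExt s0 r0 (n + 1))
    (h1 : X.sink (Fin.last n) ∉ Set.range X.ιV)
    (h2 : IsSink X.s (X.sink (Fin.last n)))
    (h3 : Function.Injective X.sink) : GExt s0 r0 n where
  V := {v : X.V // v ≠ X.sink (Fin.last n)}
  Ed := {e : X.Ed // X.r e ≠ X.sink (Fin.last n)}
  s := fun e => ⟨X.s e.1, fun h => h2 e.1 h⟩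
  r := fun e => ⟨X.r e.1, e.2⟩
  ιV := fun v => ⟨X.ιV v, fun h => h1 ⟨v, h⟩⟩
  ιE := fun f => ⟨X.ιE f, by rw [X.compat_r]; exact fun h => h1 ⟨r0 f, h⟩⟩
  sink := fun i => ⟨X.sink i.castSucc,
    fun h => absurd (h3 h) (Fin.ne_of_lt (Fin.castSucc_lt_last i))⟩
  injV := fun a b h => X.injV (congrArg Subtype.val h)
  injE := fun a b h => X.injE (congrArg Subtype.val h)
  compat_s := fun f => Subtype.ext (X.compat_s f)
  compat_r := fun f => Subtype.ext (X.compat_r f)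

/-- If `(F, w_i)` is a simple `(n+1)`-sink extension of `G`, then
`F \ w_{n+1}` is a simple `n`-sink extension of `G`, and
`(F \ w_{n+1}) * W_{(F; w_{n+1})}` is isomorphic to `F` as an extension of `G`
(by an isomorphism fixing `G` and the sinks). -/
theorem stmt13 {V0 Ed0 : Type} {s0 r0 : Ed0 → V0} {n : ℕ} (X : GExt s0 r0 (n + 1))
    (hrow : RowFinite X.s) (hX : IsNSinkExt X) (hsimple : Simple X)
    (h1 : X.sink (Fin.last n) ∉ Set.range X.ιV)
    (h2 : IsSink X.s (X.sink (Fin.last n)))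
    (h3 : Function.Injective X.sink) :
    IsNSinkExt (X.deleteLast h1 h2 h3) ∧ Simple (X.deleteLast h1 h2 h3) ∧
      Nonempty (GExtIso ((X.deleteLast h1 h2 h3).star (Wvec X (Fin.last n))) X) := by
  classical
  set L := X.sink (Fin.last n) with hLdef
  set D := X.deleteLast h1 h2 h3 with hDdef
  -- every vertex of `H` is a sink
  have hsink_of_H : ∀ v : X.V, v ∈ X.H → ∃ i, v = X.sink i := by
    intro v hv
    have hmem : v ∈ Set.range X.ιV ∪ Set.range X.sink := by
      rw [hsimple]; exact Set.mem_univ v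
    rcases hmem with h | ⟨i, hi⟩
    · exact absurd h hv
    · exact ⟨i, hi.symm⟩
  -- every source of an edge lies in `G`
  have hsrcAll : ∀ e : X.Ed, ∃ w, X.s e = X.ιV w := by
    intro e
    have hmem : X.s e ∈ Set.range X.ιV ∪ Set.range X.sink := by
      rw [hsimple]; exact Set.mem_univ _
    rcases hmem with ⟨w, hw⟩ | ⟨i, hi⟩
    · exact ⟨w, hw.symm⟩
    · exact absurd hi.symm (hX.sink_sink i e)
  -- membership in H of D
  have hHiff : ∀ v : D.V, v ∈ D.H ↔ v.1 ∈ X.H := by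
    intro v
    simp only [GExt.H, Set.mem_compl_iff, Set.mem_range]
    constructor
    · intro h hc
      obtain ⟨w, hw⟩ := hc
      exact h ⟨w, Subtype.ext hw⟩
    · intro h hc
      obtain ⟨w, hw⟩ := hc
      exact h ⟨w, congrArg Subtype.val hw⟩
  have hsinkD : ∀ v : D.V, v.1 ∈ X.H → ∃ j : Fin n, v = D.sink j := by
    intro v hv
    obtain ⟨i, hi⟩ := hsink_of_H v.1 hv
    have hne : i ≠ Fin.last n := by
      intro hcon
      exact v.2 (by rw [hi, hcon])
    exact ⟨i.castPred hne, Subtype.ext (by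
      show v.1 = X.sink ((i.castPred hne).castSucc)
      rw [Fin.castSucc_castPred i hne]; exact hi)⟩
  have part1 : IsNSinkExt D := by
    constructor
    · -- H_finite
      have : D.H = Subtype.val ⁻¹' X.H := by
        ext v; exact hHiff v
      rw [this]
      exact Set.Finite.preimage (Set.injOn_of_injective Subtype.val_injective) hX.H_finite
    · -- no_sources
      intro v hv
      obtain ⟨e, he⟩ := hX.no_sources v.1 ((hHiff v).1 hv)
      refine ⟨⟨e, ?_⟩, Subtype.ext he⟩
      rw [he]; exact v.2
    · -- sink_mem
      intro i
      exact (hHiff _).2 (hX.sink_mem i.castSucc)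
    · -- sink_sink
      intro i e he
      exact hX.sink_sink i.castSucc e.1 (congrArg Subtype.val he)
    · -- sink_inj
      intro a b hab
      have := h3 (congrArg Subtype.val hab)
      exact Fin.castSucc_injective n this
    · -- sink_only
      intro v hv _
      exact hsinkD v ((hHiff v).1 hv)
    · -- no_loops
      rintro ⟨v, hv⟩
      refine hX.no_loops ⟨v.1, ?_⟩
      refine Relation.TransGen.lift Subtype.val ?_ _ _ hv
      rintro a b ⟨ha, hb, e, hse, hre⟩
      exact ⟨(hHiff a).1 ha, (hHiff b).1 hb,
        e.1, congrArg Subtype.val hse, congrArg Subtype.val hre⟩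
    · -- new_edges
      intro e he
      refine (hHiff _).2 (hX.new_edges e.1 ?_)
      rintro ⟨f, hf⟩
      exact he ⟨f, Subtype.ext hf⟩
    · -- g_sinks
      intro v hv e he
      exact hX.g_sinks v hv e.1 (congrArg Subtype.val he)
  have part2 : Simple D := by
    rw [Simple, Set.eq_univ_iff_forall]
    intro v
    by_cases hv : v.1 ∈ Set.range X.ιV
    · obtain ⟨w, hw⟩ := hv
      exact Or.inl ⟨w, Subtype.ext hw⟩
    · obtain ⟨j, hj⟩ := hsinkD v hv
      exact Or.inr ⟨j, hj.symm⟩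
  refine ⟨part1, part2, ?_⟩
  -- the set of edges from `w` into the last sink
  set S : V0 → Set X.Ed := fun w => {e | X.s e = X.ιV w ∧ X.r e = L} with hSdef
  have hZE : ∀ w, ZE X w (Fin.last n) = (fun e => [e]) '' S w := by
    intro w
    ext p
    constructor
    · rintro ⟨hne, hpath, hhead⟩
      match p, hne with
      | e :: q, _ =>
        obtain ⟨hse, hq⟩ := hpath
        have hreH : X.r e ∈ X.H := hhead e rfl
        obtain ⟨i, hi⟩ := hsink_of_H _ hreH
        cases q with
        | nil => exact ⟨e, ⟨hse, hq⟩, rfl⟩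
        | cons f q' =>
          exact absurd hq.1 (by rw [hi]; exact hX.sink_sink i f)
    · rintro ⟨e, ⟨hse, hre⟩, rfl⟩
      refine ⟨List.cons_ne_nil _ _, ⟨hse, hre⟩, ?_⟩
      intro f hf
      simp only [List.head?_cons, Option.mem_some_iff] at hf
      rw [← hf, hre]
      exact hX.sink_mem (Fin.last n)
  have hWvec : ∀ w, Wvec X (Fin.last n) w = (S w).ncard := by
    intro w
    rw [Wvec, hZE]
    exact Set.ncard_image_of_injective _ (fun a b h => by injection h)
  have hSfin : ∀ w, (S w).Finite := fun w =>
    (hrow (X.ιV w)).subset (fun e he => he.1)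
  haveI : ∀ w, Fintype (S w) := fun w => (hSfin w).fintype
  have finEq : ∀ w, ↥(S w) ≃ Fin (Wvec X (Fin.last n) w) := by
    intro w
    exact Fintype.equivFinOfCardEq (by
      rw [hWvec w, ← Nat.card_coe_set_eq, Nat.card_eq_fintype_card])
  -- vertex equivalence
  let vEquiv : D.V ⊕ Unit ≃ X.V :=
    { toFun := Sum.elim Subtype.val (fun _ => L)
      invFun := fun v => if h : v = L then Sum.inr () else Sum.inl ⟨v, h⟩
      left_inv := by
        rintro (⟨v, hv⟩ | ⟨⟩)
        · exact dif_neg hv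
        · exact dif_pos rfl
      right_inv := by
        intro v
        by_cases h : v = L
        · show (Sum.elim Subtype.val (fun _ => L) (if h : v = L then Sum.inr () else Sum.inl ⟨v, h⟩) : X.V) = v
          rw [dif_pos h]; exact h.symm
        · show (Sum.elim Subtype.val (fun _ => L) (if h : v = L then Sum.inr () else Sum.inl ⟨v, h⟩) : X.V) = v
          rw [dif_neg h]; rfl }
  -- edge equivalence
  choose f hf using (fun e : {e : X.Ed // X.r e = L} => hsrcAll e.1)
  let fiberEq1 : ∀ w, {e : {e : X.Ed // X.r e = L} // f e = w} ≃ ↥(S w) := fun w =>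
    { toFun := fun e => ⟨e.1.1, ⟨by rw [hf e.1, e.2], e.1.2⟩⟩
      invFun := fun e => ⟨⟨e.1, e.2.2⟩, X.injV ((hf ⟨e.1, e.2.2⟩).symm.trans e.2.1)⟩
      left_inv := fun e => rfl
      right_inv := fun e => rfl }
  let T : (Σ w : V0, Fin (Wvec X (Fin.last n) w)) ≃ {e : X.Ed // X.r e = L} :=
    (Equiv.sigmaCongrRight (fun w => (fiberEq1 w).trans (finEq w))).symm.trans
      (Equiv.sigmaFiberEquiv f)
  have hT : ∀ (w : V0) (j : Fin (Wvec X (Fin.last n) w)),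
      X.s (T ⟨w, j⟩).1 = X.ιV w ∧ X.r (T ⟨w, j⟩).1 = L :=
    fun w j => ((finEq w).symm j).2
  let eEquiv : D.Ed ⊕ (Σ w : V0, Fin (Wvec X (Fin.last n) w)) ≃ X.Ed :=
    (Equiv.sumCongr (Equiv.refl D.Ed) T).trans
      ((Equiv.sumComm _ _).trans (Equiv.sumCompl (fun e => X.r e = L)))
  refine ⟨⟨vEquiv, eEquiv, ?_, ?_, ?_, ?_, ?_⟩⟩
  · -- map_s
    rintro (d | ⟨w, j⟩)
    · rfl
    · exact ((hT w j).1).symm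
  · -- map_r
    rintro (d | ⟨w, j⟩)
    · rfl
    · exact ((hT w j).2).symm
  · -- map_ιV
    intro v; rfl
  · -- map_ιE
    intro e; rfl
  · -- map_sink
    intro i
    have hsnoc : (D.star (Wvec X (Fin.last n))).sink =
        Fin.snoc (fun i => Sum.inl (D.sink i)) (Sum.inr ()) := rfl
    refine Fin.lastCases ?_ ?_ i
    · have e : (D.star (Wvec X (Fin.last n))).sink (Fin.last n) = Sum.inr () := by
        rw [hsnoc]; exact Fin.snoc_last (α := fun _ => D.V ⊕ Unit) _ _
      rw [e]
      rfl
    · intro j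
      have e : (D.star (Wvec X (Fin.last n))).sink j.castSucc = Sum.inl (D.sink j) := by
        rw [hsnoc]; exact Fin.snoc_castSucc (α := fun _ => D.V ⊕ Unit) _ _ _
      rw [e]
      rfl
end

section
/- Let E be a row-finite directed graph, let S be a set of sinks of E, and let w ∈ E^0. If w ∉ saturation(S), then either there is a path from w to a sink of E not in S, or there is an infinite path in E beginning at w. -/
/-- Let `E` be a row-finite graph and `S` a set of sinks of `E`.
Any vertex `w` outside the saturation of `S` admits either a finite path to a sink
of `E` not in `S`, or an infinite path beginning at `w`. -/
theorem stmt19 {V Ed : Type} (s r : Ed → V) (hrow : RowFinite s)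
    (S : Set V) (hS : ∀ v ∈ S, IsSink s v)
    (w : V) (hw : w ∉ Saturation s r S) :
    (∃ v, IsSink s v ∧ v ∉ S ∧ Reaches s r w v) ∨
      (∃ x : ℕ → Ed, s (x 0) = w ∧ ∀ k, s (x (k + 1)) = r (x k)) := by
  classical
  set Sat := Saturation s r S with hSat
  have hSsub : S ⊆ Sat := fun v hv => Set.mem_sInter.2 fun H hH => hH.1 hv
  have hher : Hereditary s r Sat := fun e he =>
    Set.mem_sInter.2 fun H hH => hH.2.1 e (Set.mem_sInter.1 he H hH)
  have hsat : Saturated s r Sat := fun v hns hall =>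
    Set.mem_sInter.2 fun H hH => hH.2.2 v hns fun e hse => Set.mem_sInter.1 (hall e hse) H hH
  set R : V → V → Prop := fun b a => Step s r a b with hR
  have key : ∀ v, ¬ Acc R v → ∃ e, s e = v ∧ ¬ Acc R (r e) := by
    intro v hv
    by_contra h
    push_neg at h
    refine hv (Acc.intro v fun b hb => ?_)
    obtain ⟨e, he1, he2⟩ := hb
    exact he2 ▸ h e he1
  have acc_case : ∀ v, Acc R v → v ∉ Sat →
      ∃ t, IsSink s t ∧ t ∉ S ∧ Reaches s r v t := by
    intro v hacc
    induction hacc with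
    | intro v h ih =>
      intro hv
      by_cases hsink : IsSink s v
      · exact ⟨v, hsink, fun hvS => hv (hSsub hvS), Relation.ReflTransGen.refl⟩
      · have : ¬ ∀ e, s e = v → r e ∈ Sat := fun hall => hv (hsat v hsink hall)
        push_neg at this
        obtain ⟨e, hse, hre⟩ := this
        obtain ⟨t, ht1, ht2, ht3⟩ := ih (r e) ⟨e, hse, rfl⟩ hre
        exact ⟨t, ht1, ht2, Relation.ReflTransGen.head ⟨e, hse, rfl⟩ ht3⟩
  by_cases hacc : Acc R w
  · exact Or.inl (acc_case w hacc hw)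
  · right
    let F : ℕ → {e : Ed // ¬ Acc R (r e)} := fun n =>
      Nat.rec ⟨(key w hacc).choose, ((key w hacc).choose_spec).2⟩
        (fun _ p => ⟨(key (r p.1) p.2).choose, ((key (r p.1) p.2).choose_spec).2⟩) n
    refine ⟨fun n => (F n).1, ((key w hacc).choose_spec).1, fun k => ?_⟩
    exact ((key (r (F k).1) (F k).2).choose_spec).1
end
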